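/- For every t > 0 and x, y ∈ ℝ^d, the Mehler kernel W_t(x,y) = (2π sinh 2t)^{-d/2} · exp(−(|x−y|²/2)·coth 2t − ⟨x,y⟩·tanh t) satisfies 0 < W_t(x,y) ≤ (2πt)^{-d/2} · exp(−|x−y|²/(4t)). -/

import Mathlib

/-!
The prefactor only grows when `sinh 2t` is replaced by `t ≤ sinh 2t`. For the exponent,
`coth 2t = (coth t + tanh t) / 2` and `4⟨x, y⟩ = |x + y|² - |x - y|²` turn it into
`-|x - y|² coth t / 4 - |x + y|² tanh t / 4`; the second term is nonpositive, and
`coth t ≥ 1 / t` because `tanh t ≤ t`.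
-/

open Real
open scoped RealInnerProductSpace

namespace Real

theorem sinh_le_mul_cosh {t : ℝ} (ht : 0 ≤ t) : sinh t ≤ t * cosh t := by
  have hmono : MonotoneOn (fun x => x * cosh x - sinh x) (Set.Ici 0) := by
    refine monotoneOn_of_hasDerivWithinAt_nonneg (f' := fun x => x * sinh x) (convex_Ici 0)
      (by fun_prop) (fun x _ => ?_) (fun x hx => ?_)
    · exact (((hasDerivAt_id x).mul (hasDerivAt_cosh x)).sub (hasDerivAt_sinh x)
        |>.congr_deriv (by simp)).hasDerivWithinAt
    · rw [interior_Ici, Set.mem_Ioi] at hx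
      exact mul_nonneg hx.le (sinh_nonneg_iff.mpr hx.le)
  simpa using hmono Set.self_mem_Ici (Set.mem_Ici.mpr ht) ht

theorem inv_le_cosh_div_sinh {t : ℝ} (ht : 0 < t) : t⁻¹ ≤ cosh t / sinh t := by
  rw [inv_eq_one_div, div_le_div_iff₀ ht (sinh_pos_iff.mpr ht), one_mul, mul_comm]
  exact sinh_le_mul_cosh ht.le

theorem cosh_two_mul_div_sinh_two_mul {t : ℝ} (ht : t ≠ 0) :
    cosh (2 * t) / sinh (2 * t) = (cosh t / sinh t + tanh t) / 2 := by
  have hs : sinh t ≠ 0 := sinh_ne_zero.mpr ht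
  have hc : cosh t ≠ 0 := (cosh_pos t).ne'
  rw [cosh_two_mul, sinh_two_mul, tanh_eq_sinh_div_cosh]
  field_simp

end Real

section MehlerExponent

variable {E : Type*} [NormedAddCommGroup E] [InnerProductSpace ℝ E]

theorem mehler_exponent_eq {t : ℝ} (ht : t ≠ 0) (x y : E) :
    -(dist x y ^ 2 / 2) * (cosh (2 * t) / sinh (2 * t)) - ⟪x, y⟫ * tanh t =
      -(dist x y ^ 2 / 4) * (cosh t / sinh t) - ‖x + y‖ ^ 2 / 4 * tanh t := by
  rw [Real.cosh_two_mul_div_sinh_two_mul ht, dist_eq_norm, norm_add_sq_real, norm_sub_sq_real]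
  ring

theorem mehler_exponent_le {t : ℝ} (ht : 0 < t) (x y : E) :
    -(dist x y ^ 2 / 2) * (cosh (2 * t) / sinh (2 * t)) - ⟪x, y⟫ * tanh t ≤
      -dist x y ^ 2 / (4 * t) := by
  have htanh : 0 ≤ ‖x + y‖ ^ 2 / 4 * tanh t := by
    rw [tanh_eq_sinh_div_cosh]
    have := sinh_pos_iff.mpr ht
    positivity
  have hcoth : dist x y ^ 2 / 4 * t⁻¹ ≤ dist x y ^ 2 / 4 * (cosh t / sinh t) :=
    mul_le_mul_of_nonneg_left (Real.inv_le_cosh_div_sinh ht) (by positivity)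
  calc _ = -(dist x y ^ 2 / 4) * (cosh t / sinh t) - ‖x + y‖ ^ 2 / 4 * tanh t :=
        mehler_exponent_eq ht.ne' x y
    _ ≤ -(dist x y ^ 2 / 4) * t⁻¹ := by linarith
    _ = -dist x y ^ 2 / (4 * t) := by ring

end MehlerExponent

/-- Bounds on the Mehler kernel of the Hermite heat semigroup. -/
theorem mehler_kernel_bounds (d : ℕ) (t : ℝ) (ht : 0 < t)
    (x y : EuclideanSpace ℝ (Fin d)) :
    0 < (2 * π * Real.sinh (2 * t)) ^ (-(d : ℝ) / 2) *
          Real.exp (-(dist x y ^ 2 / 2) * (Real.cosh (2 * t) / Real.sinh (2 * t))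
            - ⟪x, y⟫ * Real.tanh t) ∧
      (2 * π * Real.sinh (2 * t)) ^ (-(d : ℝ) / 2) *
          Real.exp (-(dist x y ^ 2 / 2) * (Real.cosh (2 * t) / Real.sinh (2 * t))
            - ⟪x, y⟫ * Real.tanh t) ≤
        (2 * π * t) ^ (-(d : ℝ) / 2) * Real.exp (-dist x y ^ 2 / (4 * t)) := by
  have hsinh : t ≤ sinh (2 * t) := by linarith [self_le_sinh_iff.mpr (by linarith : 0 ≤ 2 * t)]
  have hprefactor : (2 * π * sinh (2 * t)) ^ (-(d : ℝ) / 2) ≤ (2 * π * t) ^ (-(d : ℝ) / 2) :=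
    rpow_le_rpow_of_nonpos (by positivity) (by gcongr)
      (div_nonpos_of_nonpos_of_nonneg (neg_nonpos.mpr d.cast_nonneg) zero_le_two)
  have hsinh_pos : 0 < sinh (2 * t) := hsinh.trans_lt' ht
  refine ⟨by positivity, ?_⟩
  exact mul_le_mul hprefactor (exp_le_exp.mpr (mehler_exponent_le ht x y)) (exp_pos _).le
    (by positivity)
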